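/- On ℝ^k with smooth functions μ (nowhere zero), Y1, Y2 of coordinates y1,…,yk, define the antisymmetric bivector P by P_{12} = μ^{-1}, P_{13} = Y1, P_{23} = Y2, all other independent entries zero. If Y1 and Y2 depend only on y1, y2, y3 and the ratio Y2/Y1 is independent of y3 (with Y1 nonvanishing), then P satisfies the Jacobi identity (i.e., the Schouten bracket [P,P] vanishes) if and only if ∂(μY1)/∂y1 + ∂(μY2)/∂y2 = 0. -/

import Mathlib

/-- Partial derivative `∂F/∂y_i` on `ℝ^n`. -/
noncomputable def pd {n : ℕ} (i : Fin n) (F : (Fin n → ℝ) → ℝ) (x : Fin n → ℝ) : ℝ :=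
  fderiv ℝ F x (Pi.single i 1)

/-- The Schouten bracket `[A,B]_{ijk}` of two bivector fields on `ℝ^n`:
`[A,B]_{ijk} = -∑_m (B_{mk} ∂_m A_{ij} + A_{mk} ∂_m B_{ij} + cyclic(i,j,k))`. -/
noncomputable def schouten {n : ℕ} (A B : (Fin n → ℝ) → Fin n → Fin n → ℝ)
    (x : Fin n → ℝ) (i j k : Fin n) : ℝ :=
  -∑ m, (B x m k * pd m (fun y => A y i j) x + A x m k * pd m (fun y => B y i j) x
       + B x m i * pd m (fun y => A y j k) x + A x m i * pd m (fun y => B y j k) x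
       + B x m j * pd m (fun y => A y k i) x + A x m j * pd m (fun y => B y k i) x)

set_option maxHeartbeats 1000000

lemma sum3_of_eq_zero {n : ℕ} {a b c : Fin n} (hab : a ≠ b) (hac : a ≠ c) (hbc : b ≠ c)
    {f : Fin n → ℝ} (h : ∀ m, m ≠ a → m ≠ b → m ≠ c → f m = 0) :
    ∑ m, f m = f a + f b + f c := by
  have hsub : ∑ m ∈ ({a, b, c} : Finset (Fin n)), f m = ∑ m, f m :=
    Finset.sum_subset (Finset.subset_univ _) (by
      intro m _ hm
      simp only [Finset.mem_insert, Finset.mem_singleton, not_or] at hm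
      exact h m hm.1 hm.2.1 hm.2.2)
  rw [← hsub, Finset.sum_insert (by simp [hab, hac]), Finset.sum_insert (by simp [hbc]),
    Finset.sum_singleton]
  ring

lemma pd_neg {n : ℕ} (m : Fin n) (f : (Fin n → ℝ) → ℝ) (x : Fin n → ℝ) :
    pd m (fun y => -f y) x = -pd m f x := by
  simp [pd, fderiv_neg]

lemma pd_const {n : ℕ} (m : Fin n) (x : Fin n → ℝ) (c : ℝ) :
    pd m (fun _ => c) x = 0 := by simp [pd]

lemma pd_zero {n : ℕ} (m : Fin n) (x : Fin n → ℝ) :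
    pd m (fun _ => (0:ℝ)) x = 0 := by simp [pd]

lemma pd_line_zero {n : ℕ} {f : (Fin n → ℝ) → ℝ} {f' : (Fin n → ℝ) →L[ℝ] ℝ}
    {x : Fin n → ℝ} {m : Fin n} (hf : HasFDerivAt f f' x)
    (h : ∀ t : ℝ, f (x + t • (Pi.single m 1 : Fin n → ℝ)) = f x) :
    f' (Pi.single m 1) = 0 := by
  have hc : HasDerivAt (fun s : ℝ => x + s • (Pi.single m 1 : Fin n → ℝ)) (Pi.single m 1) 0 := by
    simpa using ((hasDerivAt_id (0:ℝ)).smul_const (Pi.single m 1)).const_add x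
  have hf' : HasFDerivAt f f' ((fun s : ℝ => x + s • (Pi.single m 1 : Fin n → ℝ)) 0) := by simpa using hf
  have hcomp := hf'.comp_hasDerivAt 0 hc
  have heq : (f ∘ fun s : ℝ => x + s • (Pi.single m 1 : Fin n → ℝ)) = fun _ : ℝ => f x :=
    funext fun t => h t
  rw [heq] at hcomp
  simpa using hcomp.unique (hasDerivAt_const (0:ℝ) (f x))

lemma anti_aux {n : ℕ} (i0 i1 i2 i j : Fin n)
    (hd01 : i0 ≠ i1) (hd02 : i0 ≠ i2) (hd12 : i1 ≠ i2) (u v w : ℝ) :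
    (if j = i0 ∧ i = i1 then u else if j = i1 ∧ i = i0 then -u
     else if j = i0 ∧ i = i2 then v else if j = i2 ∧ i = i0 then -v
     else if j = i1 ∧ i = i2 then w else if j = i2 ∧ i = i1 then -w else 0)
    = -(if i = i0 ∧ j = i1 then u else if i = i1 ∧ j = i0 then -u
     else if i = i0 ∧ j = i2 then v else if i = i2 ∧ j = i0 then -v
     else if i = i1 ∧ j = i2 then w else if i = i2 ∧ j = i1 then -w else 0) := by
  split_ifs <;> first | ring1 | (exfalso; casesm* _ ∧ _ <;> subst_vars <;> simp_all)

lemma diag_aux {n : ℕ} (i0 i1 i2 i : Fin n)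
    (hd01 : i0 ≠ i1) (hd02 : i0 ≠ i2) (hd12 : i1 ≠ i2) (u v w : ℝ) :
    (if i = i0 ∧ i = i1 then u else if i = i1 ∧ i = i0 then -u
     else if i = i0 ∧ i = i2 then v else if i = i2 ∧ i = i0 then -v
     else if i = i1 ∧ i = i2 then w else if i = i2 ∧ i = i1 then -w else (0:ℝ)) = 0 := by
  split_ifs <;> first | rfl | (exfalso; casesm* _ ∧ _ <;> subst_vars <;> simp_all)


/-- On `ℝ^k` (k ≥ 3) the bivector with `P_{12} = μ⁻¹`, `P_{13} = Y1`,
`P_{23} = Y2` (all other independent entries zero), where `Y1, Y2` depend only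
on `y₁, y₂, y₃`, `Y1` is nonvanishing and the ratio `Y2/Y1` does not depend on
`y₃`, satisfies the Jacobi identity (vanishing Schouten bracket `[P,P] = 0`)
iff `∂(μY1)/∂y₁ + ∂(μY2)/∂y₂ = 0`. -/
theorem stmt_1 (k : ℕ) (hk : 3 ≤ k)
    (μ Y1 Y2 : (Fin k → ℝ) → ℝ)
    (hμ : ContDiff ℝ (⊤ : ℕ∞) μ) (hY1 : ContDiff ℝ (⊤ : ℕ∞) Y1) (hY2 : ContDiff ℝ (⊤ : ℕ∞) Y2)
    (hμ0 : ∀ x, μ x ≠ 0) (hY10 : ∀ x, Y1 x ≠ 0)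
    (i0 i1 i2 : Fin k)
    (h0 : (i0 : ℕ) = 0) (h1 : (i1 : ℕ) = 1) (h2 : (i2 : ℕ) = 2)
    (hdep : ∀ x x' : Fin k → ℝ, x i0 = x' i0 → x i1 = x' i1 → x i2 = x' i2 →
      Y1 x = Y1 x' ∧ Y2 x = Y2 x')
    (hratio : ∀ x x' : Fin k → ℝ, x i0 = x' i0 → x i1 = x' i1 →
      Y2 x / Y1 x = Y2 x' / Y1 x')
    (P : (Fin k → ℝ) → Fin k → Fin k → ℝ)
    (hP : ∀ x i j, P x i j =
      if i = i0 ∧ j = i1 then (μ x)⁻¹ else if i = i1 ∧ j = i0 then -(μ x)⁻¹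
      else if i = i0 ∧ j = i2 then Y1 x else if i = i2 ∧ j = i0 then -Y1 x
      else if i = i1 ∧ j = i2 then Y2 x else if i = i2 ∧ j = i1 then -Y2 x
      else 0) :
    (∀ x i j l, schouten P P x i j l = 0) ↔
    (∀ x, pd i0 (fun y => μ y * Y1 y) x + pd i1 (fun y => μ y * Y2 y) x = 0) := by
  have hd01 : i0 ≠ i1 := fun h => by rw [h] at h0; omega
  have hd02 : i0 ≠ i2 := fun h => by rw [h] at h0; omega
  have hd12 : i1 ≠ i2 := fun h => by rw [h] at h1; omega
  have hd10 := hd01.symm; have hd20 := hd02.symm; have hd21 := hd12.symm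
  have dμ : Differentiable ℝ μ := hμ.differentiable (by simp)
  have dY1 : Differentiable ℝ Y1 := hY1.differentiable (by simp)
  have dY2 : Differentiable ℝ Y2 := hY2.differentiable (by simp)
  -- function-level descriptions of P
  have hf01 : (fun y => P y i0 i1) = fun y => (μ y)⁻¹ := funext fun y => by
    rw [hP]; simp
  have hf10 : (fun y => P y i1 i0) = fun y => -(μ y)⁻¹ := funext fun y => by
    rw [hP]; simp [hd01, hd02, hd12, hd10, hd20, hd21]
  have hf02 : (fun y => P y i0 i2) = Y1 := funext fun y => by
    rw [hP]; simp [hd01, hd02, hd12, hd10, hd20, hd21]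
  have hf20 : (fun y => P y i2 i0) = fun y => -Y1 y := funext fun y => by
    rw [hP]; simp [hd01, hd02, hd12, hd10, hd20, hd21]
  have hf12 : (fun y => P y i1 i2) = Y2 := funext fun y => by
    rw [hP]; simp [hd01, hd02, hd12, hd10, hd20, hd21]
  have hf21 : (fun y => P y i2 i1) = fun y => -Y2 y := funext fun y => by
    rw [hP]; simp [hd01, hd02, hd12, hd10, hd20, hd21]
  have hv01 : ∀ y, P y i0 i1 = (μ y)⁻¹ := fun y => congrFun hf01 y
  have hv10 : ∀ y, P y i1 i0 = -(μ y)⁻¹ := fun y => congrFun hf10 y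
  have hv02 : ∀ y, P y i0 i2 = Y1 y := fun y => congrFun hf02 y
  have hv20 : ∀ y, P y i2 i0 = -Y1 y := fun y => congrFun hf20 y
  have hv12 : ∀ y, P y i1 i2 = Y2 y := fun y => congrFun hf12 y
  have hv21 : ∀ y, P y i2 i1 = -Y2 y := fun y => congrFun hf21 y
  have hPz1 : ∀ (y : Fin k → ℝ) i j, i ≠ i0 → i ≠ i1 → i ≠ i2 → P y i j = 0 := by
    intro y i j n0 n1 n2; rw [hP]; simp [n0, n1, n2]
  have hPz2 : ∀ (y : Fin k → ℝ) i j, j ≠ i0 → j ≠ i1 → j ≠ i2 → P y i j = 0 := by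
    intro y i j n0 n1 n2; rw [hP]; simp [n0, n1, n2]
  have hPdiag : ∀ (y : Fin k → ℝ) i, P y i i = 0 := fun y i => by
    rw [hP y i i]; exact diag_aux i0 i1 i2 i hd01 hd02 hd12 _ _ _
  have hPanti : ∀ (y : Fin k → ℝ) i j, P y j i = -P y i j := fun y i j => by
    rw [hP y j i, hP y i j]; exact anti_aux i0 i1 i2 i j hd01 hd02 hd12 _ _ _
  -- derivative vanishing off the support directions
  have hpdY12z : ∀ (x : Fin k → ℝ) m, m ≠ i0 → m ≠ i1 → m ≠ i2 →
      pd m Y1 x = 0 ∧ pd m Y2 x = 0 := by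
    intro x m n0 n1 n2
    have hline : ∀ t : ℝ, (x + t • (Pi.single m 1 : Fin k → ℝ)) i0 = x i0 := by
      intro t; simp [Pi.single_eq_of_ne (Ne.symm n0)]
    have hline1 : ∀ t : ℝ, (x + t • (Pi.single m 1 : Fin k → ℝ)) i1 = x i1 := by
      intro t; simp [Pi.single_eq_of_ne (Ne.symm n1)]
    have hline2 : ∀ t : ℝ, (x + t • (Pi.single m 1 : Fin k → ℝ)) i2 = x i2 := by
      intro t; simp [Pi.single_eq_of_ne (Ne.symm n2)]
    constructor
    · exact pd_line_zero (dY1 x).hasFDerivAt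
        (fun t => ((hdep _ x (hline t) (hline1 t) (hline2 t)).1))
    · exact pd_line_zero (dY2 x).hasFDerivAt
        (fun t => ((hdep _ x (hline t) (hline1 t) (hline2 t)).2))
  -- product rule
  have hpdmul : ∀ (x : Fin k → ℝ) m (f g : (Fin k → ℝ) → ℝ),
      Differentiable ℝ f → Differentiable ℝ g →
      pd m (fun y => f y * g y) x = f x * pd m g x + g x * pd m f x := by
    intro x m f g hf hg
    have h := (hf x).hasFDerivAt.mul (hg x).hasFDerivAt
    simp only [pd]; rw [show (fun y => f y * g y) = f * g from rfl, h.fderiv]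
    simp [pd, smul_eq_mul]
  -- the ratio condition
  have hrat : ∀ x : Fin k → ℝ, Y1 x * pd i2 Y2 x - Y2 x * pd i2 Y1 x = 0 := by
    intro x
    have dg : Differentiable ℝ (fun y => Y2 y / Y1 y) := by
      simp only [div_eq_mul_inv]; exact dY2.mul (dY1.inv hY10)
    have hline : ∀ t : ℝ, (x + t • (Pi.single i2 1 : Fin k → ℝ)) i0 = x i0 := by
      intro t; simp [Pi.single_eq_of_ne hd02]
    have hline1 : ∀ t : ℝ, (x + t • (Pi.single i2 1 : Fin k → ℝ)) i1 = x i1 := by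
      intro t; simp [Pi.single_eq_of_ne hd12]
    have hg0 : pd i2 (fun y => Y2 y / Y1 y) x = 0 :=
      pd_line_zero (dg x).hasFDerivAt (fun t => hratio _ x (hline t) (hline1 t))
    have hY2eq : Y2 = fun y => Y2 y / Y1 y * Y1 y :=
      funext fun y => (div_mul_cancel₀ (Y2 y) (hY10 y)).symm
    have hpdY2 : pd i2 Y2 x = Y2 x / Y1 x * pd i2 Y1 x := by
      conv_lhs => rw [hY2eq]
      rw [hpdmul x i2 (fun y => Y2 y / Y1 y) Y1 dg dY1, hg0]
      ring
    rw [hpdY2]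
    field_simp [hY10 x]
    ring
  -- derivative of μ⁻¹
  have hpdinv : ∀ (x : Fin k → ℝ) m, pd m (fun y => (μ y)⁻¹) x = -((μ x)^2)⁻¹ * pd m μ x := by
    intro x m
    have dg : Differentiable ℝ (fun y => (μ y)⁻¹) := dμ.inv hμ0
    have hone : pd m (fun y => μ y * (μ y)⁻¹) x = 0 := by
      rw [show (fun y => μ y * (μ y)⁻¹) = fun _ => (1:ℝ) from
        funext fun y => mul_inv_cancel₀ (hμ0 y)]
      exact pd_const m x 1
    have h := hpdmul x m μ (fun y => (μ y)⁻¹) dμ dg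
    rw [hone] at h
    have ha := hμ0 x
    field_simp at h ⊢
    linarith
  -- Schouten in terms of the three cyclic sums
  have Tdef : ∀ (x : Fin k → ℝ) i j l, schouten P P x i j l =
      -2 * ((∑ m, P x m l * pd m (fun y => P y i j) x)
          + (∑ m, P x m i * pd m (fun y => P y j l) x)
          + (∑ m, P x m j * pd m (fun y => P y l i) x)) := by
    intro x i j l
    simp only [schouten]
    rw [Finset.sum_congr rfl (fun m _ => show
      (P x m l * pd m (fun y => P y i j) x + P x m l * pd m (fun y => P y i j) x
       + P x m i * pd m (fun y => P y j l) x + P x m i * pd m (fun y => P y j l) x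
       + P x m j * pd m (fun y => P y l i) x + P x m j * pd m (fun y => P y l i) x)
      = 2 * (P x m l * pd m (fun y => P y i j) x + P x m i * pd m (fun y => P y j l) x
           + P x m j * pd m (fun y => P y l i) x) from by ring)]
    rw [← Finset.mul_sum, Finset.sum_add_distrib, Finset.sum_add_distrib]
    ring
  -- vanishing of sums
  have Tzc : ∀ (x : Fin k → ℝ) a b c, c ≠ i0 → c ≠ i1 → c ≠ i2 →
      (∑ m, P x m c * pd m (fun y => P y a b) x) = 0 := by
    intro x a b c n0 n1 n2
    exact Finset.sum_eq_zero fun m _ => by rw [hPz2 x m c n0 n1 n2]; ring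
  have Tza : ∀ (x : Fin k → ℝ) a b c, a ≠ i0 → a ≠ i1 → a ≠ i2 →
      (∑ m, P x m c * pd m (fun y => P y a b) x) = 0 := by
    intro x a b c n0 n1 n2
    have : (fun y => P y a b) = fun _ => (0:ℝ) := funext fun y => hPz1 y a b n0 n1 n2
    exact Finset.sum_eq_zero fun m _ => by rw [this, pd_zero]; ring
  have Tzb : ∀ (x : Fin k → ℝ) a b c, b ≠ i0 → b ≠ i1 → b ≠ i2 →
      (∑ m, P x m c * pd m (fun y => P y a b) x) = 0 := by
    intro x a b c n0 n1 n2
    have : (fun y => P y a b) = fun _ => (0:ℝ) := funext fun y => hPz2 y a b n0 n1 n2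
    exact Finset.sum_eq_zero fun m _ => by rw [this, pd_zero]; ring
  have Tanti : ∀ (x : Fin k → ℝ) a b c,
      (∑ m, P x m c * pd m (fun y => P y b a) x)
        = -∑ m, P x m c * pd m (fun y => P y a b) x := by
    intro x a b c
    have hfa : (fun y => P y b a) = fun y => -(P y a b) := funext fun y => hPanti y a b
    rw [← Finset.sum_neg_distrib]
    refine Finset.sum_congr rfl fun m _ => ?_
    rw [hfa, pd_neg]; ring
  have Scyc : ∀ (x : Fin k → ℝ) i j l, schouten P P x i j l = schouten P P x j l i := by
    intro x i j l; rw [Tdef, Tdef]; ring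
  have Sswap : ∀ (x : Fin k → ℝ) i j l, schouten P P x j i l = -schouten P P x i j l := by
    intro x i j l
    rw [Tdef, Tdef, Tanti x i j l, Tanti x l i j, Tanti x j l i]
    ring
  have Srep : ∀ (x : Fin k → ℝ) i l, schouten P P x i i l = 0 := by
    intro x i l
    have := Sswap x i i l
    linarith
  have Szl : ∀ (x : Fin k → ℝ) i j l, l ≠ i0 → l ≠ i1 → l ≠ i2 →
      schouten P P x i j l = 0 := by
    intro x i j l n0 n1 n2
    rw [Tdef, Tzc x i j l n0 n1 n2, Tzb x j l i n0 n1 n2, Tza x l i j n0 n1 n2]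
    ring
  -- the main computation at (i0, i1, i2)
  have Sval : ∀ x : Fin k → ℝ, schouten P P x i0 i1 i2 =
      2 * ((μ x)^2)⁻¹ *
        (pd i0 (fun y => μ y * Y1 y) x + pd i1 (fun y => μ y * Y2 y) x) := by
    intro x
    rw [Tdef]
    rw [sum3_of_eq_zero hd01 hd02 hd12
      (f := fun m => P x m i2 * pd m (fun y => P y i0 i1) x)
      (fun m n0 n1 n2 => by beta_reduce; rw [hPz1 x m i2 n0 n1 n2]; ring)]
    rw [sum3_of_eq_zero hd01 hd02 hd12
      (f := fun m => P x m i0 * pd m (fun y => P y i1 i2) x)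
      (fun m n0 n1 n2 => by beta_reduce; rw [hPz1 x m i0 n0 n1 n2]; ring)]
    rw [sum3_of_eq_zero hd01 hd02 hd12
      (f := fun m => P x m i1 * pd m (fun y => P y i2 i0) x)
      (fun m n0 n1 n2 => by beta_reduce; rw [hPz1 x m i1 n0 n1 n2]; ring)]
    beta_reduce
    rw [hf01, hf12, hf20]
    rw [hv02 x, hv12 x, hPdiag x i2, hPdiag x i0, hPdiag x i1,
      hv10 x, hv20 x, hv01 x, hv21 x]
    rw [pd_neg, pd_neg, pd_neg, hpdinv, hpdinv, hpdinv]
    rw [hpdmul x i0 μ Y1 dμ dY1, hpdmul x i1 μ Y2 dμ dY2]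
    have hr := hrat x
    have ha := hμ0 x
    field_simp
    ring_nf
    linear_combination ((μ x)^2) * hr
  constructor
  · intro h x
    have hs := Sval x
    rw [h x i0 i1 i2] at hs
    have hc : (2:ℝ) * ((μ x)^2)⁻¹ ≠ 0 := by
      have := hμ0 x; positivity
    exact (mul_eq_zero.mp hs.symm).resolve_left hc
  · intro hdiv x i j l
    have S012 : schouten P P x i0 i1 i2 = 0 := by rw [Sval x, hdiv x]; ring
    have S120 : schouten P P x i1 i2 i0 = 0 := by rw [Scyc, Scyc]; exact S012
    have S201 : schouten P P x i2 i0 i1 = 0 := by rw [Scyc]; exact S012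
    have S102 : schouten P P x i1 i0 i2 = 0 := by rw [Sswap x i0 i1 i2, S012]; ring
    have S021 : schouten P P x i0 i2 i1 = 0 := by rw [Sswap x i2 i0 i1, S201]; ring
    have S210 : schouten P P x i2 i1 i0 = 0 := by rw [Sswap x i1 i2 i0, S120]; ring
    by_cases hl : l = i0 ∨ l = i1 ∨ l = i2
    · by_cases hi : i = i0 ∨ i = i1 ∨ i = i2
      · by_cases hj : j = i0 ∨ j = i1 ∨ j = i2
        · rcases hi with rfl | rfl | rfl <;> rcases hj with rfl | rfl | rfl <;>
            rcases hl with rfl | rfl | rfl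
          · exact Srep x _ _
          · exact Srep x _ _
          · exact Srep x _ _
          · rw [Scyc, Scyc]; exact Srep x _ _
          · rw [Scyc]; exact Srep x _ _
          · exact S012
          · rw [Scyc, Scyc]; exact Srep x _ _
          · exact S021
          · rw [Scyc]; exact Srep x _ _
          · rw [Scyc]; exact Srep x _ _
          · rw [Scyc, Scyc]; exact Srep x _ _
          · exact S102
          · exact Srep x _ _
          · exact Srep x _ _
          · exact Srep x _ _
          · exact S120
          · rw [Scyc, Scyc]; exact Srep x _ _
          · rw [Scyc]; exact Srep x _ _
          · rw [Scyc]; exact Srep x _ _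
          · exact S201
          · rw [Scyc, Scyc]; exact Srep x _ _
          · exact S210
          · rw [Scyc]; exact Srep x _ _
          · rw [Scyc, Scyc]; exact Srep x _ _
          · exact Srep x _ _
          · exact Srep x _ _
          · exact Srep x _ _
        · push_neg at hj
          rw [Scyc, Scyc]
          exact Szl x l i j hj.1 hj.2.1 hj.2.2
      · push_neg at hi
        rw [Scyc]
        exact Szl x j l i hi.1 hi.2.1 hi.2.2
    · push_neg at hl
      exact Szl x i j l hl.1 hl.2.1 hl.2.2
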